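/- arXiv:1509.08228 — 2 statements merged into one kernel-verified Lean document; each statement's English description precedes it below -/
import Mathlib

section
/- Let u ∈ C¹([0,1]) with u'(y) ≥ c₀ > 0, let c = u(y_c) for some y_c ∈ [0,1], and define for continuous f the operator (Tf)(y) = ∫_{y_c}^{y} (u(y')−c)^{-2} ∫_{y_c}^{y'} f(z)(u(z)−c)² dz dy'. Then |(T1)(y)| ≤ (y − y_c)²/2 and by iteration |(T^k 1)(y)| ≤ (y − y_c)^{2k}/(2k)! for all k ≥ 1. -/
/-!
Since `u` is monotone, the weight `(u z - c)²` on the inner integral is largest at its endpoint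
`y'`, where it cancels against the prefactor `(u y' - c)⁻²`. So a bound `|f z| ≤ C |z - y_c|^m`
is simply integrated twice from `y_c`, giving `|T f y| ≤ C |y - y_c|^(m+2) / ((m+1)(m+2))`;
starting from `f = 1`, induction on `k` produces `(2k)!`.
-/

open MeasureTheory

/-- The operator `T f (y) = ∫_{y_c}^{y} (u(y')−c)^{-2} ∫_{y_c}^{y'} f(z)(u(z)−c)² dz dy'`. -/
noncomputable def rayT (u : ℝ → ℝ) (c y_c : ℝ) (f : ℝ → ℝ) : ℝ → ℝ :=
  fun y => ∫ y' in y_c..y, ((u y' - c) ^ 2)⁻¹ * ∫ z in y_c..y', f z * (u z - c) ^ 2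

open Set
open scoped Interval

lemma abs_integral_le_of_abs_le_mul_abs_sub_pow {g : ℝ → ℝ} {a b C : ℝ} (n : ℕ)
    (hC : 0 ≤ C) (hg : ∀ x ∈ Ι a b, |g x| ≤ C * |x - a| ^ n) :
    |∫ x in a..b, g x| ≤ C * (|b - a| ^ (n + 1) / (n + 1)) := by
  have hint : IntervalIntegrable (fun x => C * |x - a| ^ n) volume a b := by
    apply Continuous.intervalIntegrable; fun_prop
  have hpow : |∫ x in a..b, |x - a| ^ n| = |b - a| ^ (n + 1) / (n + 1) := by
    rcases le_total a b with h | h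
    · rw [intervalIntegral.integral_of_le h, ← uIoc_of_le h, integral_pow_abs_sub_uIoc,
        abs_of_nonneg (by positivity)]
    · rw [intervalIntegral.integral_of_ge h, abs_neg, ← uIoc_of_ge h,
        integral_pow_abs_sub_uIoc, abs_of_nonneg (by positivity)]
  calc |∫ x in a..b, g x|
      ≤ |∫ x in a..b, C * |x - a| ^ n| :=
        intervalIntegral.norm_integral_le_abs_of_norm_le (f := g)
          ((ae_restrict_iff' measurableSet_uIoc).2 (.of_forall hg)) hint
    _ = C * (|b - a| ^ (n + 1) / (n + 1)) := by
        rw [intervalIntegral.integral_const_mul, abs_mul, abs_of_nonneg hC, hpow]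

lemma sq_sub_le_sq_sub_of_monotoneOn {u : ℝ → ℝ} {a b z : ℝ} (hu : MonotoneOn u (uIcc a b))
    (hz : z ∈ uIcc a b) : (u z - u a) ^ 2 ≤ (u b - u a) ^ 2 :=
  sq_le_sq.2 (abs_sub_left_of_mem_uIcc (hu.mapsTo_uIcc hz))

section RayleighOperator

variable {u : ℝ → ℝ} {s : Set ℝ} [hs : s.OrdConnected] {y_c : ℝ}

lemma abs_rayT_le (hu : MonotoneOn u s) (hyc : y_c ∈ s) {f : ℝ → ℝ} {C : ℝ} (m : ℕ)
    (hC : 0 ≤ C) (hf : ∀ z ∈ s, |f z| ≤ C * |z - y_c| ^ m) {y : ℝ} (hy : y ∈ s) :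
    |rayT u (u y_c) y_c f y| ≤ C / ((m + 1) * (m + 2)) * |y - y_c| ^ (m + 2) := by
  have houter : ∀ y' ∈ Ι y_c y,
      |((u y' - u y_c) ^ 2)⁻¹ * ∫ z in y_c..y', f z * (u z - u y_c) ^ 2| ≤
        C / (m + 1) * |y' - y_c| ^ (m + 1) := by
    intro y' hy'
    have hy's : y' ∈ s := hs.uIcc_subset hyc hy (uIoc_subset_uIcc hy')
    have hmono : MonotoneOn u (uIcc y_c y') :=
      hu.mono (hs.uIcc_subset hyc hy's)
    have hinner : |∫ z in y_c..y', f z * (u z - u y_c) ^ 2|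
        ≤ (u y' - u y_c) ^ 2 * C * (|y' - y_c| ^ (m + 1) / (m + 1)) := by
      refine abs_integral_le_of_abs_le_mul_abs_sub_pow m (by positivity) fun z hz => ?_
      have hz' := uIoc_subset_uIcc hz
      rw [abs_mul, abs_of_nonneg (sq_nonneg (u z - u y_c)), mul_assoc, mul_comm]
      exact mul_le_mul (sq_sub_le_sq_sub_of_monotoneOn hmono hz')
        (hf z (hs.uIcc_subset hyc hy's hz')) (abs_nonneg _) (sq_nonneg _)
    rw [abs_mul, abs_of_nonneg (inv_nonneg.2 (sq_nonneg _))]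
    rcases eq_or_ne (u y' - u y_c) 0 with h0 | h0
    · -- junk value `0⁻¹ = 0`: the integrand of `T` vanishes where `u y' = u y_c`
      rw [h0, zero_pow two_ne_zero, inv_zero, zero_mul]; positivity
    · calc ((u y' - u y_c) ^ 2)⁻¹ * |∫ z in y_c..y', f z * (u z - u y_c) ^ 2|
          ≤ ((u y' - u y_c) ^ 2)⁻¹ *
              ((u y' - u y_c) ^ 2 * C * (|y' - y_c| ^ (m + 1) / (m + 1))) :=
            mul_le_mul_of_nonneg_left hinner (by positivity)
        _ = C / (m + 1) * |y' - y_c| ^ (m + 1) := by field_simp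
  calc |rayT u (u y_c) y_c f y|
      ≤ C / (m + 1) * (|y - y_c| ^ (m + 1 + 1) / (↑(m + 1) + 1)) :=
        abs_integral_le_of_abs_le_mul_abs_sub_pow (m + 1) (by positivity) houter
    _ = C / ((m + 1) * (m + 2)) * |y - y_c| ^ (m + 2) := by push_cast; field_simp; ring

lemma abs_rayT_iterate_const_one_le (hu : MonotoneOn u s) (hyc : y_c ∈ s) (k : ℕ) {y : ℝ}
    (hy : y ∈ s) :
    |(rayT u (u y_c) y_c)^[k] (fun _ => 1) y| ≤ (y - y_c) ^ (2 * k) / (2 * k).factorial := by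
  induction k generalizing y with
  | zero => simp
  | succ k ih =>
    have hf : ∀ z ∈ s, |(rayT u (u y_c) y_c)^[k] (fun _ => 1) z|
        ≤ ((2 * k).factorial : ℝ)⁻¹ * |z - y_c| ^ (2 * k) := fun z hz => by
      rw [(even_two_mul k).pow_abs, inv_mul_eq_div]; exact ih hz
    have hfact :
        ((2 * (k + 1)).factorial : ℝ) = (2 * k).factorial * ((2 * k + 1) * (2 * k + 2)) := by
      rw [show 2 * (k + 1) = 2 * k + 1 + 1 by ring, Nat.factorial_succ, Nat.factorial_succ]
      push_cast; ring
    rw [Function.iterate_succ_apply']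
    refine (abs_rayT_le hu hyc (2 * k) (by positivity) hf hy).trans_eq ?_
    rw [hfact, ← (even_two_mul (k + 1)).pow_abs, show 2 * (k + 1) = 2 * k + 2 by ring]
    push_cast; field_simp

end RayleighOperator

theorem stmt_4_general (u u' : ℝ → ℝ) (c₀ : ℝ) (hc₀ : 0 < c₀)
    (hu : ∀ y ∈ Set.Icc (0:ℝ) 1, HasDerivAt u (u' y) y)
    (hlow : ∀ y ∈ Set.Icc (0:ℝ) 1, c₀ ≤ u' y)
    (y_c : ℝ) (hyc : y_c ∈ Set.Icc (0:ℝ) 1) (c : ℝ) (hc : c = u y_c) :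
    ∀ y ∈ Set.Icc (0:ℝ) 1,
      |rayT u c y_c (fun _ => 1) y| ≤ (y - y_c) ^ 2 / 2 ∧
      ∀ k : ℕ, 1 ≤ k →
        |(rayT u c y_c)^[k] (fun _ => 1) y| ≤ (y - y_c) ^ (2 * k) / (Nat.factorial (2 * k)) := by
  have hmono : MonotoneOn u (Icc 0 1) :=
    monotoneOn_of_hasDerivWithinAt_nonneg (convex_Icc 0 1)
      (fun x hx => (hu x hx).continuousAt.continuousWithinAt)
      (fun x hx => (hu x (interior_subset hx)).hasDerivWithinAt)
      (fun x hx => hc₀.le.trans (hlow x (interior_subset hx)))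
  subst hc
  intro y hy
  refine ⟨?_, fun k _ => abs_rayT_iterate_const_one_le hmono hyc k hy⟩
  simpa using abs_rayT_iterate_const_one_le hmono hyc 1 hy

theorem stmt_4 (u u' : ℝ → ℝ) (c₀ : ℝ) (hc₀ : 0 < c₀)
    (hu : ∀ y ∈ Set.Icc (0:ℝ) 1, HasDerivAt u (u' y) y)
    (hu'c : ContinuousOn u' (Set.Icc 0 1))
    (hlow : ∀ y ∈ Set.Icc (0:ℝ) 1, c₀ ≤ u' y)
    (y_c : ℝ) (hyc : y_c ∈ Set.Icc (0:ℝ) 1) (c : ℝ) (hc : c = u y_c) :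
    ∀ y ∈ Set.Icc (0:ℝ) 1,
      |rayT u c y_c (fun _ => 1) y| ≤ (y - y_c) ^ 2 / 2 ∧
      ∀ k : ℕ, 1 ≤ k →
        |(rayT u c y_c)^[k] (fun _ => 1) y| ≤ (y - y_c) ^ (2 * k) / (Nat.factorial (2 * k)) :=
  stmt_4_general u u' c₀ hc₀ hu hlow y_c hyc c hc
end

section
/- Let u ∈ C²([0,1]) with u' ≥ c₀ > 0 and let c ∈ [u(0), u(1)], y_c = u^{-1}(c). Suppose φ ∈ C²([0,1]) solves (u−c)(φ'' − α²φ) − u''φ = 0 with φ(0) = φ(1) = 0 and φ not identically zero. Then u''(y_c) = 0. -/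
/-!
If `u''(y_c) ≠ 0`, the equation at `y_c` forces `φ(y_c) = 0`; we show that then `φ ≡ 0`.
With `w = u - c`, the Wronskian `ψ = w φ' - w' φ` satisfies `ψ' = α² w φ`, and the flux
`F = Re(φ̄ ψ) / w` satisfies `F' = |ψ|² / w² + α² |φ|² ≥ 0` away from `y_c`. Near `y_c`,
`|φ| ≤ M |y - y_c|` and `|w| ≥ c₀ |y - y_c|`, so `|F| ≤ (M / c₀) |ψ| → 0` because `ψ(y_c) = 0`.
Hence `F` is continuous and nondecreasing on `[0, 1]` and vanishes at both ends, so `F ≡ 0`,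
and then `F' ≡ 0` forces `φ ≡ 0`.
-/

open Set Filter Topology

section Calculus

variable {E : Type*} [NormedAddCommGroup E] [NormedSpace ℝ E] {a b x : ℝ}

theorem DifferentiableOn.hasDerivAt_derivWithin_Icc {f : ℝ → E}
    (hf : DifferentiableOn ℝ f (Icc a b)) (hx : x ∈ Ioo a b) :
    HasDerivAt f (derivWithin f (Icc a b) x) x :=
  (hf x (Ioo_subset_Icc_self hx)).hasDerivWithinAt.hasDerivAt (Icc_mem_nhds hx.1 hx.2)

theorem ContDiffOn.hasDerivAt_derivWithin_iteratedDerivWithin_two {f : ℝ → E}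
    (hf : ContDiffOn ℝ 2 f (Icc a b)) (hx : x ∈ Ioo a b) :
    HasDerivAt (derivWithin f (Icc a b)) (iteratedDerivWithin 2 f (Icc a b) x) x := by
  rw [iteratedDerivWithin_succ', iteratedDerivWithin_one]
  exact ((hf.derivWithin (uniqueDiffOn_Icc (hx.1.trans hx.2)) (by norm_num)).differentiableOn
    one_ne_zero).hasDerivAt_derivWithin_Icc hx

theorem mul_abs_sub_le_abs_sub_of_le_derivWithin {u : ℝ → ℝ} {C : ℝ} (hC : 0 ≤ C)
    (hu : DifferentiableOn ℝ u (Icc a b)) (hlow : ∀ y ∈ Icc a b, C ≤ derivWithin u (Icc a b) y)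
    {x y : ℝ} (hx : x ∈ Icc a b) (hy : y ∈ Icc a b) : C * |y - x| ≤ |u y - u x| := by
  wlog hxy : x ≤ y generalizing x y
  · rw [abs_sub_comm, abs_sub_comm (u y)]
    exact this hy hx (le_of_not_ge hxy)
  have hgrow : C * (y - x) ≤ u y - u x := by
    refine (convex_Icc a b).mul_sub_le_image_sub_of_le_deriv hu.continuousOn ?_ ?_ x hx y hy hxy
      <;> rw [interior_Icc]
    · exact fun z hz => (hu.hasDerivAt_derivWithin_Icc hz).differentiableAt.differentiableWithinAt
    · intro z hz
      rw [(hu.hasDerivAt_derivWithin_Icc hz).deriv]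
      exact hlow z (Ioo_subset_Icc_self hz)
  rwa [abs_of_nonneg (sub_nonneg.2 hxy),
    abs_of_nonneg ((mul_nonneg hC (sub_nonneg.2 hxy)).trans hgrow)]

theorem monotoneOn_Icc_of_hasDerivAt_nonneg_of_ne {F F' : ℝ → ℝ} {p : ℝ}
    (hF : ContinuousOn F (Icc a b)) (hF' : ∀ x ∈ Ioo a b, x ≠ p → HasDerivAt F (F' x) x)
    (hF'_nonneg : ∀ x ∈ Ioo a b, x ≠ p → 0 ≤ F' x) : MonotoneOn F (Icc a b) := by
  have avoiding : ∀ x ∈ Icc a b, ∀ y ∈ Icc a b, p ∉ Ioo x y → x ≤ y → F x ≤ F y := by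
    intro x hx y hy hp hxy
    have hsub : Ioo x y ⊆ Ioo a b := Ioo_subset_Ioo hx.1 hy.2
    have hne : ∀ z ∈ Ioo x y, z ≠ p := fun z hz hzp => hp (hzp ▸ hz)
    refine monotoneOn_of_hasDerivWithinAt_nonneg (f' := F') (convex_Icc x y)
      (hF.mono (Icc_subset_Icc hx.1 hy.2)) ?_ ?_ ⟨le_rfl, hxy⟩ ⟨hxy, le_rfl⟩ hxy <;>
      rw [interior_Icc]
    · exact fun z hz => (hF' z (hsub hz) (hne z hz)).hasDerivWithinAt
    · exact fun z hz => hF'_nonneg z (hsub hz) (hne z hz)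
  intro x hx y hy hxy
  by_cases hp : p ∈ Ioo x y
  · have hpI : p ∈ Icc a b := ⟨hx.1.trans hp.1.le, hp.2.le.trans hy.2⟩
    exact (avoiding x hx p hpI (by simp) hp.1.le).trans (avoiding p hpI y hy (by simp) hp.2.le)
  · exact avoiding x hx y hy hp hxy

end Calculus

theorem hasDerivAt_re_star_mul_div {φ ψ : ℝ → ℂ} {w : ℝ → ℝ} {φ' : ℂ} {w' k t : ℝ}
    (hφ : HasDerivAt φ φ' t) (hw : HasDerivAt w w' t) (hψ : HasDerivAt ψ (k * w t * φ t) t)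
    (hψt : ψ t = w t * φ' - w' * φ t) (hwt : w t ≠ 0) :
    HasDerivAt (fun y => (star (φ y) * ψ y).re / w y)
      (Complex.normSq (ψ t) / w t ^ 2 + k * Complex.normSq (φ t)) t := by
  have hre : HasDerivAt (fun y => (star (φ y) * ψ y).re)
      (star φ' * ψ t + star (φ t) * (k * w t * φ t)).re t :=
    Complex.reCLM.hasFDerivAt.comp_hasDerivAt t (hφ.star.mul hψ)
  refine (hre.div hw hwt).congr_deriv ?_
  rw [hψt]
  simp only [Complex.normSq_apply, Complex.mul_re, Complex.mul_im, Complex.sub_re,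
    Complex.sub_im, Complex.add_re, Complex.ofReal_re, Complex.ofReal_im,
    RCLike.star_def, Complex.conj_re, Complex.conj_im]
  field_simp
  ring

theorem abs_re_star_mul_div_le {p q : ℂ} {w K C δ : ℝ} (hK : 0 ≤ K) (hC : 0 < C)
    (hp : ‖p‖ ≤ K * δ) (hw : C * δ ≤ |w|) : |(star p * q).re / w| ≤ K / C * ‖q‖ := by
  rcases le_or_gt δ 0 with hδ | hδ
  · have : p = 0 := norm_le_zero_iff.1 (hp.trans (mul_nonpos_of_nonneg_of_nonpos hK hδ))
    rw [this, star_zero, zero_mul, Complex.zero_re, zero_div, abs_zero]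
    positivity
  have hCδ : 0 < C * δ := mul_pos hC hδ
  calc |(star p * q).re / w| ≤ ‖p‖ * ‖q‖ / |w| := by
        rw [abs_div]
        gcongr
        exact (Complex.abs_re_le_norm _).trans (by rw [norm_mul, norm_star])
    _ ≤ K * δ * ‖q‖ / (C * δ) := by gcongr
    _ = K / C * ‖q‖ := by field_simp

section Rayleigh

variable {u : ℝ → ℝ} {φ : ℝ → ℂ} {a b c α x : ℝ}

noncomputable def rayleighWronskian (s : Set ℝ) (u : ℝ → ℝ) (c : ℝ) (φ : ℝ → ℂ) (y : ℝ) : ℂ :=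
  ((u y - c : ℝ) : ℂ) * derivWithin φ s y - ((derivWithin u s y : ℝ) : ℂ) * φ y

/-- At a zero of `u - c` the division makes the flux `0`, which is its limit at `y_c` when
`φ(y_c) = 0`; this is what makes the flux continuous across the critical layer. -/
noncomputable def rayleighFlux (s : Set ℝ) (u : ℝ → ℝ) (c : ℝ) (φ : ℝ → ℂ) (y : ℝ) : ℝ :=
  (star (φ y) * rayleighWronskian s u c φ y).re / (u y - c)

theorem hasDerivAt_rayleighWronskian (hu : ContDiffOn ℝ 2 u (Icc a b))
    (hφ : ContDiffOn ℝ 2 φ (Icc a b)) (hx : x ∈ Ioo a b)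
    (heq : ((u x : ℂ) - c) * (iteratedDerivWithin 2 φ (Icc a b) x - (α : ℂ) ^ 2 * φ x)
      - ((iteratedDerivWithin 2 u (Icc a b) x : ℝ) : ℂ) * φ x = 0) :
    HasDerivAt (rayleighWronskian (Icc a b) u c φ)
      (((α ^ 2 : ℝ) : ℂ) * ((u x - c : ℝ) : ℂ) * φ x) x := by
  have hu' := (hu.differentiableOn two_ne_zero).hasDerivAt_derivWithin_Icc hx
  have hu'' := hu.hasDerivAt_derivWithin_iteratedDerivWithin_two hx
  have hφ' := (hφ.differentiableOn two_ne_zero).hasDerivAt_derivWithin_Icc hx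
  have hφ'' := hφ.hasDerivAt_derivWithin_iteratedDerivWithin_two hx
  refine ((((hu'.sub_const c).ofReal_comp).mul hφ'').sub (hu''.ofReal_comp.mul hφ')).congr_deriv ?_
  push_cast
  linear_combination heq

theorem hasDerivAt_rayleighFlux (hu : ContDiffOn ℝ 2 u (Icc a b))
    (hφ : ContDiffOn ℝ 2 φ (Icc a b)) (hx : x ∈ Ioo a b)
    (heq : ((u x : ℂ) - c) * (iteratedDerivWithin 2 φ (Icc a b) x - (α : ℂ) ^ 2 * φ x)
      - ((iteratedDerivWithin 2 u (Icc a b) x : ℝ) : ℂ) * φ x = 0) (hux : u x ≠ c) :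
    HasDerivAt (rayleighFlux (Icc a b) u c φ)
      (Complex.normSq (rayleighWronskian (Icc a b) u c φ x) / (u x - c) ^ 2
        + α ^ 2 * Complex.normSq (φ x)) x :=
  hasDerivAt_re_star_mul_div ((hφ.differentiableOn two_ne_zero).hasDerivAt_derivWithin_Icc hx)
    (((hu.differentiableOn two_ne_zero).hasDerivAt_derivWithin_Icc hx).sub_const c)
    (hasDerivAt_rayleighWronskian hu hφ hx heq) rfl (sub_ne_zero.2 hux)

theorem continuousOn_rayleighWronskian (hab : a < b) (hu : ContDiffOn ℝ 1 u (Icc a b))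
    (hφ : ContDiffOn ℝ 1 φ (Icc a b)) :
    ContinuousOn (rayleighWronskian (Icc a b) u c φ) (Icc a b) := by
  have hI := uniqueDiffOn_Icc hab
  exact ((Complex.continuous_ofReal.comp_continuousOn (hu.continuousOn.sub continuousOn_const)).mul
    (hφ.continuousOn_derivWithin hI le_rfl)).sub
    ((Complex.continuous_ofReal.comp_continuousOn (hu.continuousOn_derivWithin hI le_rfl)).mul
      hφ.continuousOn)

theorem continuousOn_rayleighFlux {c₀ y_c : ℝ} (hab : a < b) (hu : ContDiffOn ℝ 1 u (Icc a b))
    (hφ : ContDiffOn ℝ 1 φ (Icc a b)) (hc₀ : 0 < c₀) (hyc : y_c ∈ Icc a b) (hcyc : u y_c = c)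
    (hφyc : φ y_c = 0) (hgrow : ∀ y ∈ Icc a b, c₀ * |y - y_c| ≤ |u y - c|) :
    ContinuousOn (rayleighFlux (Icc a b) u c φ) (Icc a b) := by
  have hψ := continuousOn_rayleighWronskian (c := c) hab hu hφ
  intro y hy
  rcases eq_or_ne y y_c with rfl | hne
  · obtain ⟨K, hK⟩ := hφ.exists_lipschitzOnWith one_ne_zero (convex_Icc a b) isCompact_Icc
    have hφ_le : ∀ z ∈ Icc a b, ‖φ z‖ ≤ K * |z - y| := fun z hz => by
      simpa [hφyc, dist_eq_norm, Real.dist_eq] using hK.dist_le_mul z hz y hy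
    have hbound : ∀ z ∈ Icc a b, ‖rayleighFlux (Icc a b) u c φ z‖ ≤
        K / c₀ * ‖rayleighWronskian (Icc a b) u c φ z‖ := fun z hz =>
      abs_re_star_mul_div_le K.2 hc₀ (hφ_le z hz) (hgrow z hz)
    have hψ0 : rayleighWronskian (Icc a b) u c φ y = 0 := by
      simp [rayleighWronskian, hcyc, hφyc]
    have hlim : Tendsto (fun z => K / c₀ * ‖rayleighWronskian (Icc a b) u c φ z‖)
        (𝓝[Icc a b] y) (𝓝 0) := by
      simpa [hψ0] using ((hψ y hy).norm.const_mul (K / c₀ : ℝ)).tendsto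
    have hF0 : rayleighFlux (Icc a b) u c φ y = 0 := by simp [rayleighFlux, hcyc]
    rw [ContinuousWithinAt, hF0]
    exact squeeze_zero_norm' (eventually_nhdsWithin_of_forall hbound) hlim
  · have hu0 : u y - c ≠ 0 :=
      abs_pos.1 ((mul_pos hc₀ (abs_pos.2 (sub_ne_zero.2 hne))).trans_le (hgrow y hy))
    exact (Complex.continuous_re.continuousWithinAt.comp ((continuous_star.continuousWithinAt.comp
      (hφ.continuousOn y hy) (mapsTo_univ _ _)).mul (hψ y hy)) (mapsTo_univ _ _)).div
      ((hu.continuousOn y hy).sub continuousWithinAt_const) hu0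

theorem eqOn_zero_of_rayleigh {c₀ y_c : ℝ} (hab : a < b) (hu : ContDiffOn ℝ 2 u (Icc a b))
    (hφ : ContDiffOn ℝ 2 φ (Icc a b)) (hc₀ : 0 < c₀)
    (hlow : ∀ y ∈ Icc a b, c₀ ≤ derivWithin u (Icc a b) y) (hyc : y_c ∈ Icc a b)
    (hcyc : u y_c = c) (hα : α ≠ 0)
    (heq : ∀ y ∈ Icc a b,
      ((u y : ℂ) - c) * (iteratedDerivWithin 2 φ (Icc a b) y - (α : ℂ) ^ 2 * φ y)
        - ((iteratedDerivWithin 2 u (Icc a b) y : ℝ) : ℂ) * φ y = 0)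
    (hφa : φ a = 0) (hφb : φ b = 0) (hφyc : φ y_c = 0) : EqOn φ 0 (Icc a b) := by
  set F := rayleighFlux (Icc a b) u c φ
  have hgrow : ∀ y ∈ Icc a b, c₀ * |y - y_c| ≤ |u y - c| := fun y hy => by
    simpa [hcyc] using
      mul_abs_sub_le_abs_sub_of_le_derivWithin hc₀.le (hu.differentiableOn two_ne_zero) hlow hyc hy
  have hterms : ∀ x, 0 ≤ Complex.normSq (rayleighWronskian (Icc a b) u c φ x) / (u x - c) ^ 2
      ∧ 0 ≤ α ^ 2 * Complex.normSq (φ x) := fun x =>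
    ⟨div_nonneg (Complex.normSq_nonneg _) (sq_nonneg _),
      mul_nonneg (sq_nonneg α) (Complex.normSq_nonneg _)⟩
  have hF' : ∀ x ∈ Ioo a b, x ≠ y_c → HasDerivAt F
      (Complex.normSq (rayleighWronskian (Icc a b) u c φ x) / (u x - c) ^ 2
        + α ^ 2 * Complex.normSq (φ x)) x := fun x hx hxy =>
    hasDerivAt_rayleighFlux hu hφ hx (heq x (Ioo_subset_Icc_self hx)) <| sub_ne_zero.1 <|
      abs_pos.1 ((mul_pos hc₀ (abs_pos.2 (sub_ne_zero.2 hxy))).trans_le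
        (hgrow x (Ioo_subset_Icc_self hx)))
  have hmono : MonotoneOn F (Icc a b) :=
    monotoneOn_Icc_of_hasDerivAt_nonneg_of_ne (continuousOn_rayleighFlux hab (hu.of_le one_le_two)
      (hφ.of_le one_le_two) hc₀ hyc hcyc hφyc hgrow) hF' fun x _ _ =>
      add_nonneg (hterms x).1 (hterms x).2
  have hF : EqOn F 0 (Icc a b) := fun y hy => le_antisymm
    (by simpa [F, rayleighFlux, hφb] using hmono hy (right_mem_Icc.2 hab.le) hy.2)
    (by simpa [F, rayleighFlux, hφa] using hmono (left_mem_Icc.2 hab.le) hy hy.1)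
  intro y hy
  rcases eq_or_ne y y_c with rfl | hyyc
  · exact hφyc
  rcases hy.1.eq_or_lt with rfl | hay
  · exact hφa
  rcases hy.2.eq_or_lt with rfl | hyb
  · exact hφb
  have hFy : HasDerivAt F 0 y := (hasDerivAt_const y 0).congr_of_eventuallyEq <|
    eventually_of_mem (Ioo_mem_nhds hay hyb) fun z hz => hF (Ioo_subset_Icc_self hz)
  have hN := (hF' y ⟨hay, hyb⟩ hyyc).unique hFy
  simpa [hα] using ((add_eq_zero_iff_of_nonneg (hterms y).1 (hterms y).2).1 hN).2

end Rayleigh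

theorem stmt_6_general (u : ℝ → ℝ) (c₀ : ℝ) (hc₀ : 0 < c₀)
    (hu : ContDiffOn ℝ 2 u (Set.Icc 0 1))
    (hlow : ∀ y ∈ Set.Icc (0:ℝ) 1, c₀ ≤ derivWithin u (Set.Icc 0 1) y)
    (c y_c : ℝ) (hyc : y_c ∈ Set.Icc (0:ℝ) 1) (hcyc : u y_c = c)
    (α : ℝ) (hα : α ≠ 0)
    (φ : ℝ → ℂ) (hφ : ContDiffOn ℝ 2 φ (Set.Icc 0 1))
    (heq : ∀ y ∈ Set.Icc (0:ℝ) 1,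
      ((u y : ℂ) - (c : ℂ)) * (iteratedDerivWithin 2 φ (Set.Icc 0 1) y - (α : ℂ) ^ 2 * φ y)
        - ((iteratedDerivWithin 2 u (Set.Icc 0 1) y : ℝ) : ℂ) * φ y = 0)
    (hb0 : φ 0 = 0) (hb1 : φ 1 = 0)
    (hne : ∃ y ∈ Set.Icc (0:ℝ) 1, φ y ≠ 0) :
    iteratedDerivWithin 2 u (Set.Icc 0 1) y_c = 0 := by
  by_contra hu''
  have hφyc : φ y_c = 0 := by
    have h := heq y_c hyc
    rw [hcyc, sub_self, zero_mul, zero_sub, neg_eq_zero, mul_eq_zero] at h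
    exact h.resolve_left (by exact_mod_cast hu'')
  obtain ⟨y, hy, hφy⟩ := hne
  exact hφy (eqOn_zero_of_rayleigh one_pos hu hφ hc₀ hlow hyc hcyc hα heq hb0 hb1 hφyc hy)

theorem stmt_6 (u : ℝ → ℝ) (c₀ : ℝ) (hc₀ : 0 < c₀)
    (hu : ContDiffOn ℝ 2 u (Set.Icc 0 1))
    (hlow : ∀ y ∈ Set.Icc (0:ℝ) 1, c₀ ≤ derivWithin u (Set.Icc 0 1) y)
    (c y_c : ℝ) (hyc : y_c ∈ Set.Icc (0:ℝ) 1) (hcyc : u y_c = c)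
    (hc : c ∈ Set.Icc (u 0) (u 1))
    (α : ℝ) (hα : α ≠ 0)
    (φ : ℝ → ℂ) (hφ : ContDiffOn ℝ 2 φ (Set.Icc 0 1))
    (heq : ∀ y ∈ Set.Icc (0:ℝ) 1,
      ((u y : ℂ) - (c : ℂ)) * (iteratedDerivWithin 2 φ (Set.Icc 0 1) y - (α : ℂ) ^ 2 * φ y)
        - ((iteratedDerivWithin 2 u (Set.Icc 0 1) y : ℝ) : ℂ) * φ y = 0)
    (hb0 : φ 0 = 0) (hb1 : φ 1 = 0)
    (hne : ∃ y ∈ Set.Icc (0:ℝ) 1, φ y ≠ 0) :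
    iteratedDerivWithin 2 u (Set.Icc 0 1) y_c = 0 :=
  stmt_6_general u c₀ hc₀ hu hlow c y_c hyc hcyc α hα φ hφ heq hb0 hb1 hne
end
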